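/- arXiv:2103.11722 — 4 statements merged into one kernel-verified Lean document; each statement's English description precedes it below -/
import Mathlib

section
/- Let X be a totally disconnected compact Hausdorff space, R a Banach ring, K ⊆ X a closed subset, f : K → R continuous, and ε > 0. Then there exists a continuous function f̃ : X → R such that ‖f̃|_K − f‖_∞ < ε and ‖f̃‖_∞ ≤ ‖f‖_∞ + ε, where ‖·‖_∞ denotes the supremum norm. -/
/-!
Cover the compact set `K` by finitely many clopen sets `V i ∋ zᵢ` on each of which `f` stays
within `ε` of `f zᵢ`, and let `g` take the value `f zᵢ` on `V i` (later sets overriding earlier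
ones) and `0` off their union. Every value of `g` is `0` or a value of `f`, whence `‖g‖ ≤ ‖f‖`.
-/

open Set TopologicalSpace

theorem ContinuousMap.exists_piecewise_const_of_isClopen {X Y ι : Type*} [TopologicalSpace X]
    [TopologicalSpace Y] (y₀ : Y) (c : ι → Y) (U : ι → Set X) (hU : ∀ i, IsClopen (U i))
    (s : Finset ι) :
    ∃ g : C(X, Y), (∀ x, g x = y₀ ∨ ∃ i ∈ s, g x = c i) ∧
      ∀ x ∈ ⋃ i ∈ s, U i, ∃ i ∈ s, x ∈ U i ∧ g x = c i := by
  classical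
  induction s using Finset.induction_on with
  | empty => exact ⟨.const X y₀, fun _ => .inl rfl, by simp⟩
  | insert j s _ ih =>
    obtain ⟨g, hg_range, hg_cover⟩ := ih
    let g' : C(X, Y) := ⟨(U j).piecewise (fun _ => c j) g,
      continuous_const.piecewise (by simp [(hU j).frontier_eq]) g.continuous⟩
    refine ⟨g', fun x => ?_, fun x hx => ?_⟩
    · by_cases hx : x ∈ U j
      · exact .inr ⟨j, by simp, by simp [g', hx]⟩
      · rcases hg_range x with h | ⟨i, hi, h⟩
        · exact .inl (by simp [g', hx, h])
        · exact .inr ⟨i, by simp [hi], by simp [g', hx, h]⟩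
    · by_cases hxj : x ∈ U j
      · exact ⟨j, by simp, hxj, by simp [g', hxj]⟩
      · have hxs : x ∈ ⋃ i ∈ s, U i := by simpa [hxj] using hx
        obtain ⟨i, hi, hxi, h⟩ := hg_cover x hxs
        exact ⟨i, by simp [hi], hxi, by simp [g', hxj, h]⟩

namespace TopologicalSpace.IsTopologicalBasis

variable {X Y : Type*} [TopologicalSpace X] [PseudoMetricSpace Y]

theorem exists_isClopen_forall_dist_lt (hX : IsTopologicalBasis {s : Set X | IsClopen s})
    {K : Set X} (f : C(K, Y)) (z : K) {ε : ℝ} (hε : 0 < ε) :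
    ∃ V : Set X, IsClopen V ∧ (z : X) ∈ V ∧ ∀ w : K, (w : X) ∈ V → dist (f w) (f z) < ε := by
  obtain ⟨U, hU, hUeq⟩ := isOpen_induced_iff.mp (Metric.isOpen_ball.preimage f.continuous :
    IsOpen (f ⁻¹' Metric.ball (f z) ε))
  have hzU : (z : X) ∈ U := by
    change z ∈ Subtype.val ⁻¹' U
    simp [hUeq, hε]
  obtain ⟨V, hV, hzV, hVU⟩ := hX.exists_subset_of_mem_open hzU hU
  refine ⟨V, hV, hzV, fun w hw => ?_⟩
  have hwU : w ∈ Subtype.val ⁻¹' U := hVU hw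
  simpa [hUeq] using hwU

theorem exists_continuousMap_dist_lt (hX : IsTopologicalBasis {s : Set X | IsClopen s})
    {K : Set X} (hK : IsCompact K) (f : C(K, Y)) (y₀ : Y) {ε : ℝ} (hε : 0 < ε) :
    ∃ g : C(X, Y), (∀ x : K, dist (g x) (f x) < ε) ∧ ∀ x, g x = y₀ ∨ ∃ z, g x = f z := by
  choose V hV_clopen hV_mem hV_dist using fun z => hX.exists_isClopen_forall_dist_lt f z hε
  obtain ⟨t, ht⟩ := hK.elim_finite_subcover V (fun z => (hV_clopen z).isOpen)
    fun x hx => mem_iUnion.2 ⟨⟨x, hx⟩, hV_mem _⟩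
  obtain ⟨g, hg_range, hg_cover⟩ :=
    ContinuousMap.exists_piecewise_const_of_isClopen y₀ (fun z => f z) V hV_clopen t
  refine ⟨g, fun x => ?_, fun x => (hg_range x).imp_right fun ⟨z, _, h⟩ => ⟨z, h⟩⟩
  obtain ⟨z, -, hxz, h⟩ := hg_cover x (ht x.2)
  rw [h, dist_comm]
  exact hV_dist z x hxz

end TopologicalSpace.IsTopologicalBasis

theorem stmt3_general {X : Type*} [TopologicalSpace X] [CompactSpace X] [T2Space X]
    [TotallyDisconnectedSpace X] {R : Type*} [NormedRing R]
    (K : Set X) [CompactSpace K]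
    (f : C(K, R)) (ε : ℝ) (hε : 0 < ε) :
    ∃ g : C(X, R), ‖g.restrict K - f‖ < ε ∧ ‖g‖ ≤ ‖f‖ + ε := by
  obtain ⟨g, hg_dist, hg_range⟩ := isTopologicalBasis_isClopen.exists_continuousMap_dist_lt
    (isCompact_iff_compactSpace.mpr ‹_›) f 0 hε
  have hg_norm : ‖g‖ ≤ ‖f‖ := by
    refine (g.norm_le (norm_nonneg f)).mpr fun x => ?_
    rcases hg_range x with h | ⟨z, h⟩
    · simp [h]
    · exact h ▸ f.norm_coe_le_norm z
  refine ⟨g, (ContinuousMap.norm_lt_iff _ hε).mpr fun x => ?_, by linarith⟩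
  simpa [dist_eq_norm] using hg_dist x

/-- Approximate extension of continuous functions from a closed subset of a totally
disconnected compact Hausdorff space, with norm control. -/
theorem stmt3 {X : Type*} [TopologicalSpace X] [CompactSpace X] [T2Space X]
    [TotallyDisconnectedSpace X] {R : Type*} [NormedRing R] [CompleteSpace R]
    (K : Set X) (hK : IsClosed K) [CompactSpace K]
    (f : C(K, R)) (ε : ℝ) (hε : 0 < ε) :
    ∃ g : C(X, R), ‖g.restrict K - f‖ < ε ∧ ‖g‖ ≤ ‖f‖ + ε :=
  stmt3_general K f ε hε
end

section
/- Let X be a totally disconnected compact Hausdorff space, R a Banach ring, and K ⊆ X a closed subset. Then the restriction map π : C(X,R) → C(K,R) is surjective; more precisely, for every f ∈ C(K,R) and every ε > 0 there exists f̃ ∈ C(X,R) with f̃|_K = f and ‖f̃‖_∞ ≤ ‖f‖_∞ + ε. -/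
/-!
Since `X` has a basis of clopen sets, a finite clopen cover of `K` on whose pieces `f` varies
by less than `δ` yields a locally constant `H : C(X, R)` with `‖H‖ ≤ ‖f‖` and
`‖f - H|_K‖ ≤ δ`. Applying this to the successive errors with `δ = ε / 2 / 2 ^ n` and summing
the approximants gives an exact extension, whose norm is at most `‖f‖ + ε`.
-/

open Filter Finset Topology

section Iteration

variable {E F : Type*} [SeminormedAddCommGroup E] [NormedAddCommGroup F]

theorem exists_seq_tendsto_of_approx (T : E → F)
    (happrox : ∀ (y : F) (δ : ℝ), 0 < δ → ∃ x, ‖x‖ ≤ ‖y‖ ∧ ‖y - T x‖ ≤ δ)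
    (y : F) (ε : ℝ) (hε : 0 < ε) :
    ∃ x : ℕ → E, ‖x 0‖ ≤ ‖y‖ ∧ (∀ n, ‖x (n + 1)‖ ≤ ε / 2 / 2 ^ n) ∧
      Tendsto (fun N => ∑ n ∈ range N, T (x n)) atTop (𝓝 y) := by
  choose A hA_norm hA_err using happrox
  have hδ : ∀ n : ℕ, 0 < ε / 2 / 2 ^ n := fun n => by positivity
  -- `r n` is the error left after the first `n` approximation steps
  let r : ℕ → F := fun n => Nat.rec y (fun n rn => rn - T (A rn _ (hδ n))) n
  have hr_succ : ∀ n, r (n + 1) = r n - T (A (r n) _ (hδ n)) := fun n => rfl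
  have hr_le : ∀ n, ‖r (n + 1)‖ ≤ ε / 2 / 2 ^ n := fun n => hA_err _ _ (hδ n)
  refine ⟨fun n => A (r n) _ (hδ n), hA_norm _ _ _,
    fun n => (hA_norm _ _ _).trans (hr_le n), ?_⟩
  have hr_tendsto : Tendsto r atTop (𝓝 0) := by
    rw [← tendsto_add_atTop_iff_nat 1, tendsto_zero_iff_norm_tendsto_zero]
    exact squeeze_zero (fun n => norm_nonneg _) hr_le
      (summable_geometric_two' ε).tendsto_atTop_zero
  have hpartial : ∀ N, ∑ n ∈ range N, T (A (r n) _ (hδ n)) = y - r N := fun N => by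
    simp_rw [show ∀ n, T (A (r n) _ (hδ n)) = r n - r (n + 1) from
      fun n => by rw [hr_succ, sub_sub_cancel]]
    exact sum_range_sub' r N
  simp_rw [hpartial]
  simpa using hr_tendsto.const_sub y

theorem AddMonoidHom.exists_preimage_norm_le_add [CompleteSpace E] (T : E →+ F)
    (hT : Continuous T)
    (happrox : ∀ (y : F) (δ : ℝ), 0 < δ → ∃ x, ‖x‖ ≤ ‖y‖ ∧ ‖y - T x‖ ≤ δ)
    (y : F) (ε : ℝ) (hε : 0 < ε) :
    ∃ x, T x = y ∧ ‖x‖ ≤ ‖y‖ + ε := by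
  obtain ⟨x, hx0, hx_succ, hx_tendsto⟩ := exists_seq_tendsto_of_approx T happrox y ε hε
  have hsummable_succ : Summable fun n => ‖x (n + 1)‖ :=
    (summable_geometric_two' ε).of_nonneg_of_le (fun n => norm_nonneg _) hx_succ
  have hsummable : Summable fun n => ‖x n‖ := (summable_nat_add_iff 1).mp hsummable_succ
  have hsum : HasSum x (∑' n, x n) := hsummable.of_norm.hasSum
  refine ⟨∑' n, x n, tendsto_nhds_unique (hsum.map T hT).tendsto_sum_nat hx_tendsto, ?_⟩
  calc ‖∑' n, x n‖ ≤ ∑' n, ‖x n‖ := norm_tsum_le_tsum_norm hsummable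
    _ = ‖x 0‖ + ∑' n, ‖x (n + 1)‖ := hsummable.tsum_eq_zero_add
    _ ≤ ‖y‖ + ∑' n : ℕ, ε / 2 / 2 ^ n :=
      add_le_add hx0 (hsummable_succ.tsum_le_tsum hx_succ (summable_geometric_two' ε))
    _ = ‖y‖ + ε := by rw [tsum_geometric_two']

end Iteration

section Profinite

variable {X : Type*} [TopologicalSpace X]

theorem exists_continuousMap_eq_const_on_isClopen {R ι : Type*} [TopologicalSpace R] [Zero R]
    (s : Finset ι) {V : ι → Set X} (hV : ∀ i, IsClopen (V i)) (c : ι → R) :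
    ∃ g : C(X, R), ∀ y, (g y = 0 ∧ ∀ i ∈ s, y ∉ V i) ∨ ∃ i ∈ s, y ∈ V i ∧ g y = c i := by
  classical
  induction s using Finset.induction with
  | empty => exact ⟨0, fun y => Or.inl ⟨rfl, by simp⟩⟩
  | insert a s _ ih =>
    obtain ⟨g, hg⟩ := ih
    refine ⟨⟨(V a).piecewise (fun _ => c a) g,
      continuous_const.piecewise (by simp [(hV a).frontier_eq]) g.continuous⟩, fun y => ?_⟩
    by_cases hya : y ∈ V a
    · exact Or.inr ⟨a, mem_insert_self a s, hya, by simp [hya]⟩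
    · simp only [ContinuousMap.coe_mk, Set.piecewise_eq_of_notMem _ _ _ hya, mem_insert,
        forall_eq_or_imp, exists_eq_or_imp]
      have := hg y
      tauto

variable [CompactSpace X] [T2Space X] [TotallyDisconnectedSpace X]

theorem exists_isClopen_preimage_val_subset {K : Set X} {W : Set K} (hW : IsOpen W) {x : K}
    (hx : x ∈ W) : ∃ V : Set X, IsClopen V ∧ (x : X) ∈ V ∧ Subtype.val ⁻¹' V ⊆ W := by
  obtain ⟨U, hU, rfl⟩ := isOpen_induced_iff.mp hW
  obtain ⟨V, hV, hxV, hVU⟩ := compact_exists_isClopen_in_isOpen hU hx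
  exact ⟨V, hV, hxV, Set.preimage_mono hVU⟩

theorem ContinuousMap.exists_norm_le_norm_sub_restrict_le {R : Type*}
    [SeminormedAddCommGroup R] (K : Set X) [CompactSpace K] (φ : C(K, R)) {δ : ℝ}
    (hδ : 0 < δ) : ∃ H : C(X, R), ‖H‖ ≤ ‖φ‖ ∧ ‖φ - H.restrict K‖ ≤ δ := by
  choose V hV hxV hVφ using fun x : K => exists_isClopen_preimage_val_subset
    (φ.continuous.isOpen_preimage _ (Metric.isOpen_ball (x := φ x))) (Metric.mem_ball_self hδ)
  obtain ⟨t, ht⟩ := isCompact_univ.elim_finite_subcover (fun x => Subtype.val ⁻¹' V x)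
    (fun x => (hV x).isOpen.preimage continuous_subtype_val)
    (fun x _ => Set.mem_iUnion.mpr ⟨x, hxV x⟩)
  obtain ⟨H, hH⟩ := exists_continuousMap_eq_const_on_isClopen t hV (fun x => φ x)
  refine ⟨H, (norm_le _ (norm_nonneg _)).mpr fun y => ?_, (norm_le _ hδ.le).mpr fun z => ?_⟩
  · rcases hH y with ⟨hy, -⟩ | ⟨x, -, -, hy⟩
    · simp [hy]
    · exact hy ▸ φ.norm_coe_le_norm x
  · rcases hH z with ⟨-, hz⟩ | ⟨x, -, hzx, hz⟩
    · obtain ⟨x, hxt, hzx⟩ := Set.mem_iUnion₂.mp (ht (Set.mem_univ z))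
      exact absurd hzx (hz x hxt)
    · have hφz : dist (φ z) (φ x) < δ := hVφ x hzx
      simpa [hz, dist_eq_norm] using hφz.le

end Profinite

theorem stmt4_general {X : Type*} [TopologicalSpace X] [CompactSpace X] [T2Space X]
    [TotallyDisconnectedSpace X] {R : Type*} [NormedRing R] [CompleteSpace R]
    (K : Set X) [CompactSpace K]
    (f : C(K, R)) (ε : ℝ) (hε : 0 < ε) :
    ∃ g : C(X, R), g.restrict K = f ∧ ‖g‖ ≤ ‖f‖ + ε :=
  (AddMonoidHom.mk' (fun g : C(X, R) => g.restrict K) fun _ _ => rfl).exists_preimage_norm_le_add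
    (ContinuousMap.continuous_restrict K)
    (fun _ _ hδ => ContinuousMap.exists_norm_le_norm_sub_restrict_le K _ hδ) f ε hε

/-- Tietze-type extension: the restriction map `C(X,R) → C(K,R)` is surjective with norm
control, for `X` totally disconnected compact Hausdorff and `K ⊆ X` closed. -/
theorem stmt4 {X : Type*} [TopologicalSpace X] [CompactSpace X] [T2Space X]
    [TotallyDisconnectedSpace X] {R : Type*} [NormedRing R] [CompleteSpace R]
    (K : Set X) (hK : IsClosed K) [CompactSpace K]
    (f : C(K, R)) (ε : ℝ) (hε : 0 < ε) :
    ∃ g : C(X, R), g.restrict K = f ∧ ‖g‖ ≤ ‖f‖ + ε :=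
  stmt4_general K f ε hε
end

section
/- Let C*(X) and C*(Y) be the algebras C(X,ℂ), C(Y,ℂ) of continuous complex-valued functions on compact Hausdorff spaces X, Y, and let π : C(X,ℂ) → C(Y,ℂ) be the precomposition map f ↦ f ∘ Φ for a continuous map Φ : Y → X. If π is an epimorphism in the category of commutative C*-algebras (equivalently, Φ is a monomorphism of compact Hausdorff spaces), then Φ is injective and π is surjective. -/
universe u v w

namespace ContinuousMap

theorem injective_of_comp_left_cancel {X Y : Type*} [TopologicalSpace X] [TopologicalSpace Y]
    (Φ : C(Y, X)) (hΦ : ∀ g h : C(PUnit.{w + 1}, Y), Φ.comp g = Φ.comp h → g = h) :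
    Function.Injective Φ := fun y₁ y₂ hy ↦
  congr($(hΦ (const _ y₁) (const _ y₂) (by ext; exact hy)) PUnit.unit)

theorem comp_surjective_of_isClosedEmbedding {X₁ : Type*} {X : Type u} {Z : Type v}
    [TopologicalSpace X₁] [TopologicalSpace X] [NormalSpace X] [TopologicalSpace Z]
    [TietzeExtension.{u, v} Z]
    (Φ : C(X₁, X)) (hΦ : Topology.IsClosedEmbedding Φ) :
    Function.Surjective fun f : C(X, Z) ↦ f.comp Φ := fun f ↦
  f.exists_extension hΦ

end ContinuousMap

/-- If `Φ : Y → X` is a monomorphism of compact Hausdorff spaces (equivalently, the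
precomposition `π : C(X,ℂ) → C(Y,ℂ)` is an epimorphism of commutative C*-algebras),
then `Φ` is injective and `π` is surjective. -/
theorem stmt15 {X Y : Type u} [TopologicalSpace X] [CompactSpace X] [T2Space X]
    [TopologicalSpace Y] [CompactSpace Y] [T2Space Y] (Φ : C(Y, X))
    (hmono : ∀ (Z : Type u) [TopologicalSpace Z] [CompactSpace Z] [T2Space Z]
      (g h : C(Z, Y)), Φ.comp g = Φ.comp h → g = h) :
    Function.Injective Φ ∧ Function.Surjective fun f : C(X, ℂ) => f.comp Φ := by
  have hinj : Function.Injective Φ := Φ.injective_of_comp_left_cancel (hmono PUnit)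
  exact ⟨hinj, Φ.comp_surjective_of_isClosedEmbedding (Φ.continuous.isClosedEmbedding hinj)⟩
end

section
/- Let X be a compact Hausdorff space, R = ℝ or ℂ, and K ⊆ X closed. Then every f ∈ C(X,R) vanishing on K factors as f = f₀·f₁ with f₀, f₁ ∈ C(X,R) both vanishing on K; that is, the ideal I_K = {f : f|_K = 0} satisfies I_K = I_K². -/
/-!
Write `f = √‖f‖ · (f / √‖f‖)`. Both factors vanish wherever `f` does, and the second one is
continuous even at the zeros of `f` because its norm is `√‖f‖`.
-/

namespace RCLike

variable {𝕜 : Type*} [RCLike 𝕜]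

theorem norm_div_sqrt_norm (z : 𝕜) : ‖z / (√‖z‖ : 𝕜)‖ = √‖z‖ := by
  rcases eq_or_ne z 0 with rfl | hz
  · simp
  · have hsqrt : 0 < √‖z‖ := Real.sqrt_pos.mpr (norm_pos_iff.mpr hz)
    rw [norm_div, norm_ofReal, abs_of_pos hsqrt, div_eq_iff hsqrt.ne',
      Real.mul_self_sqrt (norm_nonneg z)]

theorem sqrt_norm_mul_div_sqrt_norm (z : 𝕜) : (√‖z‖ : 𝕜) * (z / √‖z‖) = z := by
  rcases eq_or_ne z 0 with rfl | hz
  · simp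
  · refine mul_div_cancel₀ z (ofReal_ne_zero.mpr ?_)
    exact (Real.sqrt_pos.mpr (norm_pos_iff.mpr hz)).ne'

theorem continuous_div_sqrt_norm : Continuous fun z : 𝕜 => z / (√‖z‖ : 𝕜) := by
  refine continuous_iff_continuousAt.mpr fun z => ?_
  rcases eq_or_ne z 0 with rfl | hz
  · have hnorm : Filter.Tendsto (fun w : 𝕜 => √‖w‖) (nhds 0) (nhds 0) := by
      simpa using (by fun_prop : Continuous fun w : 𝕜 => √‖w‖).tendsto 0
    rw [ContinuousAt, zero_div, tendsto_zero_iff_norm_tendsto_zero]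
    simpa only [norm_div_sqrt_norm] using hnorm
  · refine continuousAt_id.div (by fun_prop) (ofReal_ne_zero.mpr ?_)
    exact (Real.sqrt_pos.mpr (norm_pos_iff.mpr hz)).ne'

end RCLike

theorem stmt16_general {X : Type*} [TopologicalSpace X]
    {𝕜 : Type*} [RCLike 𝕜] (K : Set X)
    (f : C(X, 𝕜)) (hf : ∀ x ∈ K, f x = 0) :
    ∃ f₀ f₁ : C(X, 𝕜), (∀ x ∈ K, f₀ x = 0) ∧ (∀ x ∈ K, f₁ x = 0) ∧ f = f₀ * f₁ := by
  let sqrtNorm : C(𝕜, 𝕜) := ⟨fun z => (√‖z‖ : 𝕜), by fun_prop⟩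
  let divSqrtNorm : C(𝕜, 𝕜) := ⟨fun z => z / (√‖z‖ : 𝕜), RCLike.continuous_div_sqrt_norm⟩
  refine ⟨sqrtNorm.comp f, divSqrtNorm.comp f, fun x hx => ?_, fun x hx => ?_, ?_⟩
  · simp [sqrtNorm, hf x hx]
  · simp [divSqrtNorm, hf x hx]
  · ext x
    exact (RCLike.sqrt_norm_mul_div_sqrt_norm (f x)).symm

/-- Every continuous function vanishing on a closed set `K` factors as a product of two
continuous functions vanishing on `K`: the ideal `I_K` satisfies `I_K = I_K²`. -/
theorem stmt16 {X : Type*} [TopologicalSpace X] [CompactSpace X] [T2Space X]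
    {𝕜 : Type*} [RCLike 𝕜] (K : Set X) (hK : IsClosed K)
    (f : C(X, 𝕜)) (hf : ∀ x ∈ K, f x = 0) :
    ∃ f₀ f₁ : C(X, 𝕜), (∀ x ∈ K, f₀ x = 0) ∧ (∀ x ∈ K, f₁ x = 0) ∧ f = f₀ * f₁ :=
  stmt16_general K f hf
end
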